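/- Let H be a (possibly unbounded) densely defined self-adjoint operator in a separable complex Hilbert space 𝓗, let V be a bounded self-adjoint operator on 𝓗, and let n ∈ ℕ. Then (H+V−i)⁻¹ − (H−i)⁻¹ ∈ S^n if and only if (H−i)⁻¹ V (H−i)⁻¹ ∈ S^n. -/

import Mathlib

/-!
Writing `R = (H - i)⁻¹` and `R_V = (H + V - i)⁻¹`, the two forms of the second resolvent
identity `R - R_V = R_V V R = R V R_V` express each of the two operators through the other:
`R V R = -(R_V - R) - (R_V - R) V R` and `R_V - R = -R V R + (R V R) V R_V`.
So both implications follow once `S^p` is known to be a linear subspace stable under right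
multiplication by bounded operators. Stability under `T ↦ T U` for a unitary `U` is immediate
from the definition of `‖·‖_p` as a supremum over orthonormal systems, since `U` maps orthonormal
systems to orthonormal systems, and unitaries span `B(𝓗)`.
-/

open MeasureTheory Filter Topology Complex
open scoped ENNReal NNReal

noncomputable section

variable {𝓗 : Type} [NormedAddCommGroup 𝓗] [InnerProductSpace ℂ 𝓗] [CompleteSpace 𝓗]

/-- The weight function `u(x) = x - i`. -/
def uFun : ℝ → ℂ := fun x => (x : ℂ) - Complex.I

/-- `f` is the inverse Fourier transform of an `L¹` function on `ℝ`. -/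
def IsInvFourierOfL1 (f : ℝ → ℂ) : Prop :=
  ∃ g : ℝ → ℂ, Integrable g ∧ ∀ x : ℝ, f x = ∫ t : ℝ, g t * Complex.exp (Complex.I * t * x)

/-- The function class `𝒲ⁿₖ`:  `f ∈ Cⁿ` with `(f·uˡ)^{(m)}` an inverse Fourier transform of an
`L¹` function for all `l = 0,…,k`, `m = 0,…,n`. -/
def MemW (n k : ℕ) (f : ℝ → ℂ) : Prop :=
  ContDiff ℝ n f ∧
    ∀ l ≤ k, ∀ m ≤ n, IsInvFourierOfL1 (iteratedDeriv m (fun x => f x * uFun x ^ l))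

/-- Continuous functions vanishing at infinity. -/
def MemC0 (f : ℝ → ℂ) : Prop := Continuous f ∧ Tendsto f (cocompact ℝ) (𝓝 0)

/-- A finite complex (Radon) measure on `X`, given by its polar (Radon–Nikodym) representation
`dμ = ρ d|μ|` with `|ρ| = 1` a.e. -/
structure CMeasure (X : Type) [MeasurableSpace X] where
  meas : Measure X
  density : X → ℂ
  finite : IsFiniteMeasure meas
  ae_norm_one : ∀ᵐ x ∂meas, ‖density x‖ = 1

/-- Integral of `g` against the complex measure `μ`. -/
def CMeasure.integral {X : Type} [MeasurableSpace X] (μ : CMeasure X) (g : X → ℂ) : ℂ :=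
  ∫ x, g x * μ.density x ∂μ.meas

/-- Total variation norm of the complex measure `μ`. -/
def CMeasure.tv {X : Type} [MeasurableSpace X] (μ : CMeasure X) : ℝ :=
  (μ.meas Set.univ).toReal

/-- `∑ |⟨f j, T e j⟩|^p` maximized over finite orthonormal systems:  this equals `‖T‖_p^p`. -/
def schattenSum (p : ℝ) (T : 𝓗 →L[ℂ] 𝓗) : ℝ≥0∞ :=
  ⨆ (k : ℕ) (e : Fin k → 𝓗) (f : Fin k → 𝓗) (_ : Orthonormal ℂ e) (_ : Orthonormal ℂ f),
    ∑ j : Fin k, (‖(inner ℂ (f j) (T (e j)) : ℂ)‖₊ : ℝ≥0∞) ^ p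

/-- The Schatten `p`-norm (with values in `ℝ≥0∞`); for `p = ∞` it is the operator norm,
following the convention `S^∞ = B(𝓗)`. -/
def schattenNorm (p : ℝ≥0∞) (T : 𝓗 →L[ℂ] 𝓗) : ℝ≥0∞ :=
  if p = ∞ then (‖T‖₊ : ℝ≥0∞) else (schattenSum p.toReal T) ^ (1 / p.toReal)

/-- Membership in the Schatten–von Neumann ideal `S^p`. -/
def MemSchatten (p : ℝ≥0∞) (T : 𝓗 →L[ℂ] 𝓗) : Prop := schattenNorm p T ≠ ∞

/-- The trace, computed in a fixed Hilbert basis; for trace-class operators this is the trace. -/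
def opTrace (T : 𝓗 →L[ℂ] 𝓗) : ℂ :=
  ∑' i, (inner ℂ (((exists_hilbertBasis ℂ 𝓗).choose_spec.choose i : 𝓗))
      (T ((exists_hilbertBasis ℂ 𝓗).choose_spec.choose i)) : ℂ)

/-- `R` is the (bounded, everywhere defined) resolvent `(H - z)⁻¹` of the possibly unbounded
operator `H`. -/
def IsResolvent (H : 𝓗 →ₗ.[ℂ] 𝓗) (z : ℂ) (R : 𝓗 →L[ℂ] 𝓗) : Prop :=
  (∀ x : 𝓗, ∃ hx : R x ∈ H.domain, H ⟨R x, hx⟩ - z • R x = x) ∧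
  (∀ x : H.domain, R (H x - z • (x : 𝓗)) = x)

/-- The sum `H + V` of a partially defined operator and a bounded operator. -/
def pmapAdd (H : 𝓗 →ₗ.[ℂ] 𝓗) (V : 𝓗 →L[ℂ] 𝓗) : 𝓗 →ₗ.[ℂ] 𝓗 :=
  ⟨H.domain, H.toFun + (V.toLinearMap.comp H.domain.subtype)⟩

/-- `E` is the (projection-valued) spectral measure of the self-adjoint operator `H`:  it consists
of commuting self-adjoint projections, is countably additive on diagonal matrix elements, and its
Borel transform reproduces the resolvents of `H`. -/
structure IsSpectralMeasure (H : 𝓗 →ₗ.[ℂ] 𝓗) (E : Set ℝ → 𝓗 →L[ℂ] 𝓗) : Prop where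
  proj : ∀ S : Set ℝ, MeasurableSet S → E S ∘L E S = E S ∧ IsSelfAdjoint (E S)
  inter : ∀ S T : Set ℝ, MeasurableSet S → MeasurableSet T → E (S ∩ T) = E S ∘L E T
  univ : E Set.univ = 1
  diag : ∀ x : 𝓗, ∃ μ : Measure ℝ, IsFiniteMeasure μ ∧
    (∀ S : Set ℝ, MeasurableSet S → μ S = ENNReal.ofReal (‖E S x‖ ^ 2)) ∧
    ∀ (z : ℂ) (R : 𝓗 →L[ℂ] 𝓗), IsResolvent H z R →
      ∫ lam : ℝ, ((lam : ℂ) - z)⁻¹ ∂μ = (inner ℂ x (R x) : ℂ)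

/-- `A = f(H)`, via the spectral measure of `H`. -/
def IsFunCalc (H : 𝓗 →ₗ.[ℂ] 𝓗) (f : ℝ → ℂ) (A : 𝓗 →L[ℂ] 𝓗) : Prop :=
  ∃ E : Set ℝ → 𝓗 →L[ℂ] 𝓗, IsSpectralMeasure H E ∧
    ∀ x : 𝓗, ∃ μ : Measure ℝ, IsFiniteMeasure μ ∧
      (∀ S : Set ℝ, MeasurableSet S → μ S = ENNReal.ofReal (‖E S x‖ ^ 2)) ∧
      (inner ℂ x (A x) : ℂ) = ∫ lam : ℝ, f lam ∂μ

/-- The `n`-th Taylor remainder `F(1) - ∑_{k<n} (1/k!) F^{(k)}(0)` of the operator family `F`,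
where for `F t = f(H + tV)` this is `R_{n,H,f}(V)`; the derivatives are Fréchet derivatives in
the operator norm. -/
def taylorRemainder (n : ℕ) (F : ℝ → 𝓗 →L[ℂ] 𝓗) : 𝓗 →L[ℂ] 𝓗 :=
  F 1 - ∑ k ∈ Finset.range n, ((Nat.factorial k : ℝ))⁻¹ • iteratedDeriv k F 0

/-- The standard simplex `{t : 0 ≤ tᵢ, ∑ tᵢ ≤ 1}`. -/
def stdSimplex' (n : ℕ) : Set (Fin n → ℝ) := {t | (∀ i, 0 ≤ t i) ∧ ∑ i, t i ≤ 1}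

/-- The `n`-th divided difference `f^{[n]}(λ₀,…,λₙ)` (Hermite–Genocchi formula, which for
`f ∈ Cⁿ` agrees with the recursive limit definition). -/
def divDiff {n : ℕ} (f : ℝ → ℂ) (lam : Fin (n + 1) → ℝ) : ℂ :=
  ∫ t in stdSimplex' n, iteratedDeriv n f (lam 0 + ∑ i, t i * (lam i.succ - lam 0))

/-- The chain `P₀ V₁ P₁ V₂ ⋯ Vₖ Pₖ`. -/
def moiChain : (k : ℕ) → (Fin (k + 1) → 𝓗 →L[ℂ] 𝓗) → (Fin k → 𝓗 →L[ℂ] 𝓗) → (𝓗 →L[ℂ] 𝓗)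
  | 0, P, _ => P 0
  | (k + 1), P, V => (P 0) ∘L (V 0) ∘L moiChain k (fun j => P j.succ) (fun j => V j.succ)

/-- The Riemann sum approximating the multiple operator integral on the grid `1/m`, truncated
at `N`. -/
def moiSum {k : ℕ} (Es : Fin (k + 1) → Set ℝ → 𝓗 →L[ℂ] 𝓗) (φ : (Fin (k + 1) → ℝ) → ℂ)
    (Vs : Fin k → 𝓗 →L[ℂ] 𝓗) (m N : ℕ) : 𝓗 →L[ℂ] 𝓗 :=
  ∑ l ∈ Fintype.piFinset (fun _ : Fin (k + 1) => Finset.Ico (-(N : ℤ)) (N : ℤ)),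
    φ (fun j => (l j : ℝ) / (m : ℝ)) •
      moiChain k (fun j => Es j (Set.Ico ((l j : ℝ) / (m : ℝ)) (((l j : ℝ) + 1) / (m : ℝ)))) Vs

/-- `T` is the multiple operator integral `T^{H₀,…,Hₖ}_φ(V₁,…,Vₖ)`, defined as the iterated limit
(first `N → ∞`, then the mesh `1/m → 0`) of the Riemann sums built from the spectral measures of
the `Hⱼ`. -/
def IsMOI {k : ℕ} (Hs : Fin (k + 1) → 𝓗 →ₗ.[ℂ] 𝓗) (φ : (Fin (k + 1) → ℝ) → ℂ)
    (Vs : Fin k → 𝓗 →L[ℂ] 𝓗) (T : 𝓗 →L[ℂ] 𝓗) : Prop :=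
  ∃ Es : Fin (k + 1) → Set ℝ → 𝓗 →L[ℂ] 𝓗, (∀ j, IsSpectralMeasure (Hs j) (Es j)) ∧
    ∃ S : ℕ → 𝓗 →L[ℂ] 𝓗,
      (∀ m : ℕ, Tendsto (fun N => moiSum Es φ Vs (m + 1) N) atTop (𝓝 (S m))) ∧
      Tendsto S atTop (𝓝 T)

/-- Symbols `L`, `0`, `R` indicating the position of resolvents. -/
inductive LZR : Type
  | L : LZR
  | Z : LZR
  | R : LZR
deriving DecidableEq

/-- `V̌ᵉ_j` (for `j = 1,…,m`, the perturbation between `H_{j-1}` and `H_j`):  resolvents are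
attached on the left if `ε_{j-1} = R` and on the right if `ε_j = L`.  Here `Rs j` is the
resolvent `(H_j - i)⁻¹`. -/
def checkV (Rs Vs : ℕ → 𝓗 →L[ℂ] 𝓗) (eps : ℕ → LZR) (j : ℕ) : 𝓗 →L[ℂ] 𝓗 :=
  (if eps (j - 1) = LZR.R then Rs (j - 1) else 1) ∘L Vs j ∘L
    (if eps j = LZR.L then Rs j else 1)

/-- `Ǔᵉ_j` (for `j = 0,…,m`, with the convention `ε_{-1} = 0`). -/
def checkU (Rs Us : ℕ → 𝓗 →L[ℂ] 𝓗) (eps : ℕ → LZR) (j : ℕ) : 𝓗 →L[ℂ] 𝓗 :=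
  (if j ≠ 0 ∧ eps (j - 1) = LZR.R then Rs (j - 1) else 1) ∘L Us j ∘L
    (if eps j = LZR.L then Rs j else 1)

/-- `V̄_j`:  equals `(H_{j-1}-i)⁻¹ V_j (H_j-i)⁻¹` for odd `j` and `V_j` for even `j`. -/
def barV (Rs Vs : ℕ → 𝓗 →L[ℂ] 𝓗) (j : ℕ) : 𝓗 →L[ℂ] 𝓗 :=
  if j % 2 = 1 then Rs (j - 1) ∘L Vs j ∘L Rs j else Vs j

/-- The ordered product `F_{a+1} F_{a+2} ⋯ F_b` (equal to `1` if `b ≤ a`), as in the notation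
`V̄_{a,b} = V̄_{a+1} ⋯ V̄_b`. -/
def ordProd (F : ℕ → 𝓗 →L[ℂ] 𝓗) (a b : ℕ) : 𝓗 →L[ℂ] 𝓗 :=
  (((List.range' (a + 1) (b - a)).map F)).prod

/-- Sequential convergence in the strong-* operator topology. -/
def SOStarTendsto (A : ℕ → 𝓗 →L[ℂ] 𝓗) (B : 𝓗 →L[ℂ] 𝓗) : Prop :=
  (∀ x : 𝓗, Tendsto (fun n => A n x) atTop (𝓝 (B x))) ∧
  (∀ x : 𝓗, Tendsto (fun n => ContinuousLinearMap.adjoint (A n) x) atTop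
    (𝓝 (ContinuousLinearMap.adjoint B x)))

/-- Sequential convergence in `𝓛^α`:  for `α = ∞` this is strong-* convergence (of bounded
operators), and for `α < ∞` it is convergence in the Schatten `α`-norm of elements of `S^α`. -/
def LpConvergence (α : ℝ≥0∞) (A : ℕ → 𝓗 →L[ℂ] 𝓗) (B : 𝓗 →L[ℂ] 𝓗) : Prop :=
  (α = ∞ ∧ SOStarTendsto A B) ∨
  (α ≠ ∞ ∧ (∀ n, MemSchatten α (A n)) ∧ MemSchatten α B ∧
    Tendsto (fun n => schattenNorm α (A n - B)) atTop (𝓝 0))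

end

theorem ENNReal.rpow_add_le_two_rpow_mul {q : ℝ} (hq : 0 ≤ q) (a b : ℝ≥0∞) :
    (a + b) ^ q ≤ 2 ^ q * (a ^ q + b ^ q) :=
  calc (a + b) ^ q ≤ (2 * max a b) ^ q := by
        gcongr
        rw [two_mul]
        gcongr <;> simp
    _ = 2 ^ q * max (a ^ q) (b ^ q) := by
        rw [ENNReal.mul_rpow_of_nonneg _ _ hq, (ENNReal.monotone_rpow_of_nonneg hq).map_max]
    _ ≤ 2 ^ q * (a ^ q + b ^ q) := by gcongr; exact max_le_add_of_nonneg zero_le zero_le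

section Schatten

variable {𝓗 : Type} [NormedAddCommGroup 𝓗] [InnerProductSpace ℂ 𝓗]

theorem le_schattenSum {q : ℝ} {T : 𝓗 →L[ℂ] 𝓗} {k : ℕ} {e f : Fin k → 𝓗}
    (he : Orthonormal ℂ e) (hf : Orthonormal ℂ f) :
    ∑ j, (‖(inner ℂ (f j) (T (e j)) : ℂ)‖₊ : ℝ≥0∞) ^ q ≤ schattenSum q T :=
  le_iSup_of_le k <| le_iSup_of_le e <| le_iSup_of_le f <| le_iSup_of_le he <|
    le_iSup_of_le hf le_rfl

theorem schattenSum_le {q : ℝ} {T : 𝓗 →L[ℂ] 𝓗} {C : ℝ≥0∞}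
    (h : ∀ (k : ℕ) (e f : Fin k → 𝓗), Orthonormal ℂ e → Orthonormal ℂ f →
      ∑ j, (‖(inner ℂ (f j) (T (e j)) : ℂ)‖₊ : ℝ≥0∞) ^ q ≤ C) :
    schattenSum q T ≤ C :=
  iSup_le fun k => iSup_le fun e => iSup_le fun f => iSup_le fun he => iSup_le (h k e f he)

theorem schattenSum_zero {q : ℝ} (hq : 0 < q) : schattenSum q (0 : 𝓗 →L[ℂ] 𝓗) = 0 :=
  nonpos_iff_eq_zero.mp <| schattenSum_le fun _ _ _ _ _ => by
    simp [ENNReal.zero_rpow_of_pos hq]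

theorem schattenSum_smul_le {q : ℝ} (hq : 0 ≤ q) (a : ℂ) (T : 𝓗 →L[ℂ] 𝓗) :
    schattenSum q (a • T) ≤ (‖a‖₊ : ℝ≥0∞) ^ q * schattenSum q T := by
  refine schattenSum_le fun k e f he hf => ?_
  calc ∑ j, (‖(inner ℂ (f j) ((a • T) (e j)) : ℂ)‖₊ : ℝ≥0∞) ^ q
      = (‖a‖₊ : ℝ≥0∞) ^ q * ∑ j, (‖(inner ℂ (f j) (T (e j)) : ℂ)‖₊ : ℝ≥0∞) ^ q := by
        simp only [Finset.mul_sum, smul_apply, inner_smul_right,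
          nnnorm_mul, ENNReal.coe_mul, ENNReal.mul_rpow_of_nonneg _ _ hq]
    _ ≤ _ := mul_le_mul_right (le_schattenSum he hf) _

theorem schattenSum_add_le {q : ℝ} (hq : 0 ≤ q) (S T : 𝓗 →L[ℂ] 𝓗) :
    schattenSum q (S + T) ≤ 2 ^ q * (schattenSum q S + schattenSum q T) := by
  refine schattenSum_le fun k e f he hf => ?_
  calc ∑ j, (‖(inner ℂ (f j) ((S + T) (e j)) : ℂ)‖₊ : ℝ≥0∞) ^ q
      ≤ ∑ j, 2 ^ q * ((‖(inner ℂ (f j) (S (e j)) : ℂ)‖₊ : ℝ≥0∞) ^ q +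
          (‖(inner ℂ (f j) (T (e j)) : ℂ)‖₊ : ℝ≥0∞) ^ q) := by
        gcongr with j
        rw [add_apply, inner_add_right]
        exact (ENNReal.rpow_le_rpow (mod_cast nnnorm_add_le _ _) hq).trans
          (ENNReal.rpow_add_le_two_rpow_mul hq _ _)
    _ = 2 ^ q * (∑ j, (‖(inner ℂ (f j) (S (e j)) : ℂ)‖₊ : ℝ≥0∞) ^ q +
        ∑ j, (‖(inner ℂ (f j) (T (e j)) : ℂ)‖₊ : ℝ≥0∞) ^ q) := by
        rw [← Finset.sum_add_distrib, Finset.mul_sum]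
    _ ≤ _ := by gcongr <;> exact le_schattenSum he hf

theorem schattenSum_comp_linearIsometry_le {q : ℝ} (T : 𝓗 →L[ℂ] 𝓗) (U : 𝓗 →ₗᵢ[ℂ] 𝓗) :
    schattenSum q (T ∘L U.toContinuousLinearMap) ≤ schattenSum q T :=
  schattenSum_le fun _ _ _ he hf => le_schattenSum (he.comp_linearIsometry U) hf

-- For `p = 0` (exponent `1 / 0 = 0`) and `p = ∞` (operator norm) every operator is in `S^p`.
theorem memSchatten_iff {p : ℝ≥0∞} {T : 𝓗 →L[ℂ] 𝓗} :
    MemSchatten p T ↔ (0 < p.toReal → schattenSum p.toReal T ≠ ∞) := by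
  rw [MemSchatten, schattenNorm]
  split_ifs with hp
  · simp [hp]
  · rcases (ENNReal.toReal_nonneg (a := p)).eq_or_lt with hp0 | hp0
    · simp [← hp0]
    · simp [hp0]

def schattenSubmodule (p : ℝ≥0∞) : Submodule ℂ (𝓗 →L[ℂ] 𝓗) where
  carrier := {T | MemSchatten p T}
  zero_mem' := memSchatten_iff.mpr fun hp => by simp [schattenSum_zero hp]
  add_mem' {S T} hS hT := memSchatten_iff.mpr fun hp =>
    ne_top_of_le_ne_top (by finiteness [memSchatten_iff.mp hS hp, memSchatten_iff.mp hT hp])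
      (schattenSum_add_le hp.le S T)
  smul_mem' a T hT := memSchatten_iff.mpr fun hp =>
    ne_top_of_le_ne_top (by finiteness [memSchatten_iff.mp hT hp])
      (schattenSum_smul_le hp.le a T)

theorem mem_schattenSubmodule {p : ℝ≥0∞} {T : 𝓗 →L[ℂ] 𝓗} :
    T ∈ schattenSubmodule p ↔ MemSchatten p T :=
  Iff.rfl

theorem MemSchatten.comp_right [CompleteSpace 𝓗] {p : ℝ≥0∞} {T : 𝓗 →L[ℂ] 𝓗}
    (hT : MemSchatten p T) (B : 𝓗 →L[ℂ] 𝓗) : MemSchatten p (T ∘L B) := by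
  suffices h : ⊤ ≤ (schattenSubmodule p).comap (LinearMap.mulLeft ℂ T) from
    h (Submodule.mem_top (x := B))
  rw [← CStarAlgebra.span_unitary, Submodule.span_le]
  intro U hU
  rw [SetLike.mem_coe, Submodule.mem_comap, LinearMap.mulLeft_apply, mem_schattenSubmodule,
    ContinuousLinearMap.mul_def, memSchatten_iff]
  exact fun hp => ne_top_of_le_ne_top (memSchatten_iff.mp hT hp) <|
    schattenSum_comp_linearIsometry_le T (Unitary.linearIsometryEquiv ⟨U, hU⟩).toLinearIsometry

end Schatten

section Resolvent

variable {𝓗 : Type} [NormedAddCommGroup 𝓗] [InnerProductSpace ℂ 𝓗]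
  {H : 𝓗 →ₗ.[ℂ] 𝓗} {V : 𝓗 →L[ℂ] 𝓗} {z : ℂ} {R RV : 𝓗 →L[ℂ] 𝓗}

theorem IsResolvent.sub_eq_comp_comp_left (hR : IsResolvent H z R)
    (hRV : IsResolvent (pmapAdd H V) z RV) : R - RV = RV ∘L V ∘L R := by
  ext x
  obtain ⟨hx, hHx⟩ := hR.1 x
  have h := hRV.2 ⟨R x, hx⟩
  change RV (H ⟨R x, hx⟩ + V (R x) - z • R x) = R x at h
  rw [add_sub_right_comm, hHx, map_add] at h
  exact (eq_sub_of_add_eq' h).symm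

theorem IsResolvent.sub_eq_comp_comp_right (hR : IsResolvent H z R)
    (hRV : IsResolvent (pmapAdd H V) z RV) : R - RV = R ∘L V ∘L RV := by
  ext x
  obtain ⟨hx, hHx⟩ := hRV.1 x
  have h := hR.2 ⟨RV x, hx⟩
  change H ⟨RV x, hx⟩ + V (RV x) - z • RV x = x at hHx
  rw [eq_sub_of_add_eq ((sub_add_eq_add_sub ..).trans hHx), map_sub] at h
  exact sub_eq_iff_comm.mp h

end Resolvent

theorem stmt_8_general {𝓗 : Type} [NormedAddCommGroup 𝓗] [InnerProductSpace ℂ 𝓗] [CompleteSpace 𝓗]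
    (n : ℕ) (H : 𝓗 →ₗ.[ℂ] 𝓗)
    (V : 𝓗 →L[ℂ] 𝓗)
    (R RV : 𝓗 →L[ℂ] 𝓗) (hR : IsResolvent H Complex.I R)
    (hRV : IsResolvent (pmapAdd H V) Complex.I RV) :
    MemSchatten (n : ℝ≥0∞) (RV - R) ↔ MemSchatten (n : ℝ≥0∞) (R ∘L V ∘L R) := by
  have hRVR : R ∘L V ∘L R = -(RV - R) - (RV - R) ∘L V ∘L R := by
    rw [ContinuousLinearMap.sub_comp, ← hR.sub_eq_comp_comp_left hRV]
    abel
  have hdiff : RV - R = -(R ∘L V ∘L R) + (R ∘L V ∘L R) ∘L V ∘L RV := by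
    simp only [ContinuousLinearMap.comp_assoc]
    rw [← hR.sub_eq_comp_comp_right hRV, ContinuousLinearMap.comp_sub,
      ContinuousLinearMap.comp_sub, ← hR.sub_eq_comp_comp_right hRV]
    abel
  rw [← mem_schattenSubmodule, ← mem_schattenSubmodule]
  refine ⟨fun h => ?_, fun h => ?_⟩
  · rw [hRVR]
    exact sub_mem (neg_mem h) (MemSchatten.comp_right h _)
  · rw [hdiff]
    exact add_mem (neg_mem h) (MemSchatten.comp_right h _)

/-- `(H+V-i)⁻¹ - (H-i)⁻¹ ∈ Sⁿ  ↔  (H-i)⁻¹ V (H-i)⁻¹ ∈ Sⁿ`. -/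
theorem stmt_8 {𝓗 : Type} [NormedAddCommGroup 𝓗] [InnerProductSpace ℂ 𝓗] [CompleteSpace 𝓗]
    [TopologicalSpace.SeparableSpace 𝓗]
    (n : ℕ) (hn : 1 ≤ n) (H : 𝓗 →ₗ.[ℂ] 𝓗) (hH : IsSelfAdjoint H)
    (V : 𝓗 →L[ℂ] 𝓗) (hV : IsSelfAdjoint V)
    (R RV : 𝓗 →L[ℂ] 𝓗) (hR : IsResolvent H Complex.I R)
    (hRV : IsResolvent (pmapAdd H V) Complex.I RV) :
    MemSchatten (n : ℝ≥0∞) (RV - R) ↔ MemSchatten (n : ℝ≥0∞) (R ∘L V ∘L R) :=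
  stmt_8_general n H V R RV hR hRV
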